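/- For every integer n ≥ 4, any two distinct vertices u and v of CW_n have at most 3 common neighbors, i.e. |CN_{CW_n}(u, v)| ≤ 3. -/

import Mathlib

/-- The generating set S₂ = {(1 j) : 2 ≤ j ≤ n} ∪ {(j j+1) : 2 ≤ j ≤ n−1} ∪ {(2 n)},
where elements of {1,…,n} are encoded zero-indexed as `Fin n` (value k represents k+1). -/
def cwGen (n : ℕ) : Set (Equiv.Perm (Fin n)) :=
  {s | ∃ i j : Fin n, s = Equiv.swap i j ∧
      (((i : ℕ) = 0 ∧ j ≠ i) ∨
       ((j : ℕ) = (i : ℕ) + 1 ∧ 1 ≤ (i : ℕ)) ∨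
       ((i : ℕ) = 1 ∧ (j : ℕ) = n - 1))}

/-- The Cayley graph CW_n = Cay(S_n, S₂). -/
def CW (n : ℕ) : SimpleGraph (Equiv.Perm (Fin n)) where
  Adj g h := g ≠ h ∧ g⁻¹ * h ∈ cwGen n
  symm := by
    refine ⟨?_⟩
    rintro g h ⟨hne, i, j, hs, hc⟩
    refine ⟨hne.symm, i, j, ?_, hc⟩
    have hinv : h⁻¹ * g = (g⁻¹ * h)⁻¹ := by group
    rw [hinv, hs, Equiv.swap_inv]
  loopless := ⟨fun g h => h.1 rfl⟩

/-!
Common neighbours of `u ≠ v` in a Cayley graph generated by transpositions are the `u * s` with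
`s` and `g * s` both transpositions, where `g = v⁻¹ * u ≠ 1`. Any such `s` is `swap z (g z)` for a
point `z` moved by `g`. Writing `g = swap c d * swap a b`, the moved points lie in `{a, b, c, d}`:
either two of these coincide, or `g` exchanges `a ↔ b` and `c ↔ d`; in both cases at most three
transpositions `swap z (g z)` arise.
-/

open Equiv

namespace Equiv.Perm

variable {α : Type*} [DecidableEq α]

theorem IsSwap.eq_swap_apply {t : Perm α} (ht : t.IsSwap) {x : α} (hx : t x ≠ x) :
    t = swap x (t x) := by
  refine ht.isCycle.eq_swap_of_apply_apply_eq_self hx ?_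
  obtain ⟨p, q, -, rfl⟩ := ht
  exact swap_apply_self p q x

theorem exists_eq_swap_apply_of_isSwap_mul {g s : Perm α} (hg : g ≠ 1) (hs : s.IsSwap)
    (hgs : (g * s).IsSwap) : ∃ z, g z ≠ z ∧ s = swap z (g z) := by
  obtain ⟨x, y, hxy, rfl⟩ := hs
  by_cases hgx : g x = y
  · exact ⟨x, hgx ▸ hxy.symm, hgx ▸ rfl⟩
  by_cases hgy : g y = x
  · exact ⟨y, hgy ▸ hxy, hgy ▸ swap_comm x y⟩
  exfalso
  have htx : (g * swap x y) x = g y := by rw [mul_apply, swap_apply_left]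
  have hty : (g * swap x y) y = g x := by rw [mul_apply, swap_apply_right]
  have ht := hgs.eq_swap_apply (htx ▸ hgy)
  rw [htx] at ht
  -- otherwise `swap x (g y)` fixes `y`, forcing `g x = y`
  have hy : g y = y := by
    by_contra hy
    rw [ht, swap_apply_of_ne_of_ne hxy.symm (Ne.symm hy)] at hty
    exact hgx hty.symm
  rw [hy, mul_eq_right] at ht
  exact hg ht

theorem exists_setOf_isSwap_mul_isSwap_subset {g : Perm α} (hg : g ≠ 1) :
    ∃ p q r : Perm α, {s | s.IsSwap ∧ (g * s).IsSwap} ⊆ {p, q, r} := by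
  rcases Set.eq_empty_or_nonempty {s : Perm α | s.IsSwap ∧ (g * s).IsSwap} with
    h | ⟨_, ⟨a, b, hab, rfl⟩, c, d, hcd, hgab⟩
  · exact ⟨1, 1, 1, h ▸ Set.empty_subset _⟩
  have hg_eq : g = swap c d * swap a b := by rw [← hgab, mul_swap_mul_self]
  have hform : ∀ s ∈ {s | s.IsSwap ∧ (g * s).IsSwap},
      ∃ z, (z = a ∨ z = b ∨ z = c ∨ z = d) ∧ s = swap z (g z) := by
    rintro s ⟨hs, hgs⟩
    obtain ⟨z, hz, rfl⟩ := exists_eq_swap_apply_of_isSwap_mul hg hs hgs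
    refine ⟨z, ?_, rfl⟩
    by_contra! h
    rw [hg_eq, mul_apply, swap_apply_of_ne_of_ne h.1 h.2.1,
      swap_apply_of_ne_of_ne h.2.2.1 h.2.2.2] at hz
    exact hz rfl
  by_cases hc : c = a ∨ c = b
  · refine ⟨swap a (g a), swap b (g b), swap d (g d), fun s hs => ?_⟩
    obtain ⟨z, hz, rfl⟩ := hform s hs
    rcases hc with rfl | rfl <;> rcases hz with rfl | rfl | rfl | rfl <;> simp
  by_cases hd : d = a ∨ d = b
  · refine ⟨swap a (g a), swap b (g b), swap c (g c), fun s hs => ?_⟩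
    obtain ⟨z, hz, rfl⟩ := hform s hs
    rcases hd with rfl | rfl <;> rcases hz with rfl | rfl | rfl | rfl <;> simp
  push Not at hc hd
  -- `swap a b` and `swap c d` are disjoint, so `g` exchanges `a ↔ b` and `c ↔ d`
  refine ⟨swap a b, swap c d, swap c d, fun s hs => ?_⟩
  obtain ⟨z, hz, rfl⟩ := hform s hs
  rcases hz with rfl | rfl | rfl | rfl <;>
    simp [hg_eq, swap_apply_of_ne_of_ne, hc, hd, Ne.symm hc.1, Ne.symm hc.2, Ne.symm hd.1,
      Ne.symm hd.2, swap_comm]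

theorem ncard_setOf_isSwap_mul_isSwap_le_three {g : Perm α} (hg : g ≠ 1) :
    {s : Perm α | s.IsSwap ∧ (g * s).IsSwap}.ncard ≤ 3 := by
  obtain ⟨p, q, r, h⟩ := exists_setOf_isSwap_mul_isSwap_subset hg
  calc _ ≤ ({p, q, r} : Set (Perm α)).ncard := Set.ncard_le_ncard h
    _ ≤ 3 := by
      classical
      simpa [← Finset.coe_insert, ← Finset.coe_singleton, Set.ncard_coe_finset]
        using Finset.card_le_three (a := p) (b := q) (c := r)

end Equiv.Perm

theorem SimpleGraph.ncard_commonNeighbors_le_three {α : Type*} [DecidableEq α] [Finite α]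
    {G : SimpleGraph (Perm α)} (hG : ∀ ⦃g h⦄, G.Adj g h → (g⁻¹ * h).IsSwap) {u v : Perm α}
    (huv : u ≠ v) : (G.commonNeighbors u v).ncard ≤ 3 := by
  have hsub : G.commonNeighbors u v ⊆ (u * ·) '' {s | s.IsSwap ∧ (v⁻¹ * u * s).IsSwap} := by
    rintro w ⟨hu, hv⟩
    refine ⟨u⁻¹ * w, ⟨hG hu, ?_⟩, mul_inv_cancel_left u w⟩
    simpa only [mul_assoc, mul_inv_cancel_left] using hG hv
  calc _ ≤ _ := Set.ncard_le_ncard hsub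
    _ = _ := Set.ncard_image_of_injective _ (mul_right_injective u)
    _ ≤ 3 :=
      Perm.ncard_setOf_isSwap_mul_isSwap_le_three (by simpa [inv_mul_eq_one] using huv.symm)

theorem CW_adj_isSwap {n : ℕ} {g h : Perm (Fin n)} (hgh : (CW n).Adj g h) :
    (g⁻¹ * h).IsSwap := by
  obtain ⟨hne, i, j, hs, -⟩ := hgh
  refine ⟨i, j, fun hij => hne ?_, hs⟩
  rwa [hij, swap_self, ← Perm.one_def, inv_mul_eq_one] at hs

theorem stmt11_general (n : ℕ) (u v : Equiv.Perm (Fin n)) (huv : u ≠ v) :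
    ((CW n).neighborSet u ∩ (CW n).neighborSet v).ncard ≤ 3 :=
  SimpleGraph.ncard_commonNeighbors_le_three (fun _ _ => CW_adj_isSwap) huv

/-- For n ≥ 4, any two distinct vertices of CW_n have at most 3 common neighbors. -/
theorem stmt11 (n : ℕ) (hn : 4 ≤ n) (u v : Equiv.Perm (Fin n)) (huv : u ≠ v) :
    ((CW n).neighborSet u ∩ (CW n).neighborSet v).ncard ≤ 3 :=
  stmt11_general n u v huv
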